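/- For all positive integers a, b, c, the graph M_{a,b,c} satisfies μ_int(M_{a,b,c}) ≤ 2. -/
import Mathlib


open SimpleGraph

/-- The set ("spectrum") of colors appearing on edges incident to vertex `v`
under the edge coloring `c`. -/
def SimpleGraph.colorSpectrum {V : Type*} (G : SimpleGraph V) (c : Sym2 V → ℕ) (v : V) :
    Set ℕ :=
  {n | ∃ w, G.Adj v w ∧ c s(v, w) = n}

/-- A set of natural numbers is an interval of consecutive integers. -/
def IsIntervalSet (S : Set ℕ) : Prop :=
  ∀ a ∈ S, ∀ b ∈ S, ∀ x, a ≤ x → x ≤ b → x ∈ S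

/-- `c` is a `k`-improper interval edge coloring of `G`: at most `k` edges with a common
endpoint share a color, and the colors at each vertex form an interval. -/
def SimpleGraph.IsImproperIntervalColoring {V : Type*} (G : SimpleGraph V)
    (c : Sym2 V → ℕ) (k : ℕ) : Prop :=
  (∀ v n, {w | G.Adj v w ∧ c s(v, w) = n}.ncard ≤ k) ∧
    ∀ v, IsIntervalSet (G.colorSpectrum c v)

/-- The interval coloring impropriety of `G`: the least `k` such that `G` has a
`k`-improper interval edge coloring. -/
noncomputable def SimpleGraph.muInt {V : Type*} (G : SimpleGraph V) : ℕ :=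
  sInf {k | ∃ c : Sym2 V → ℕ, G.IsImproperIntervalColoring c k}

/-- The vertex set of the graph `M_{a,b,c}`: vertices `u_0,…,u_3` and
`x_1,…,x_a`, `y_1,…,y_b`, `z_1,…,z_c`. -/
inductive MVert (a b c : ℕ) : Type
  | u : Fin 4 → MVert a b c
  | x : Fin a → MVert a b c
  | y : Fin b → MVert a b c
  | z : Fin c → MVert a b c
  deriving DecidableEq, Fintype

/-- The graph `M_{a,b,c}` with edges `u_0x_i, u_1x_i, u_2x_i`, `u_0y_j, u_2y_j, u_3y_j`
and `u_0z_k, u_3z_k, u_1z_k`. -/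
def Mgraph (a b c : ℕ) : SimpleGraph (MVert a b c) :=
  SimpleGraph.fromRel (fun p q =>
    (∃ i, (p = .u 0 ∨ p = .u 1 ∨ p = .u 2) ∧ q = .x i) ∨
    (∃ j, (p = .u 0 ∨ p = .u 2 ∨ p = .u 3) ∧ q = .y j) ∨
    (∃ l, (p = .u 0 ∨ p = .u 3 ∨ p = .u 1) ∧ q = .z l))

section
set_option maxHeartbeats 1000000

def mg (a b c : ℕ) : MVert a b c → MVert a b c → ℕ
  | .u m, .x i => if m.val = 2 then i.val + 2 else i.val + 1
  | .u m, .y j => if m.val = 3 then a + j.val + 2 else a + j.val + 1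
  | .u m, .z k => if m.val = 3 then a + k.val + 2 else a + k.val + 1
  | _, _ => 0

def mcol (a b c : ℕ) : Sym2 (MVert a b c) → ℕ :=
  Sym2.lift ⟨fun p q => mg a b c p q + mg a b c q p, fun _ _ => Nat.add_comm _ _⟩

variable {a b c : ℕ}

@[simp] lemma mcol_ux (m : Fin 4) (i : Fin a) :
    mcol a b c s(.u m, .x i) = if m.val = 2 then i.val + 2 else i.val + 1 := by
  simp [mcol, mg]
@[simp] lemma mcol_xu (m : Fin 4) (i : Fin a) :
    mcol a b c s(.x i, .u m) = if m.val = 2 then i.val + 2 else i.val + 1 := by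
  simp [mcol, mg]
@[simp] lemma mcol_uy (m : Fin 4) (j : Fin b) :
    mcol a b c s(.u m, .y j) = if m.val = 3 then a + j.val + 2 else a + j.val + 1 := by
  simp [mcol, mg]
@[simp] lemma mcol_yu (m : Fin 4) (j : Fin b) :
    mcol a b c s(.y j, .u m) = if m.val = 3 then a + j.val + 2 else a + j.val + 1 := by
  simp [mcol, mg]
@[simp] lemma mcol_uz (m : Fin 4) (k : Fin c) :
    mcol a b c s(.u m, .z k) = if m.val = 3 then a + k.val + 2 else a + k.val + 1 := by
  simp [mcol, mg]
@[simp] lemma mcol_zu (m : Fin 4) (k : Fin c) :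
    mcol a b c s(.z k, .u m) = if m.val = 3 then a + k.val + 2 else a + k.val + 1 := by
  simp [mcol, mg]

@[simp] lemma finval0 : ((0 : Fin 4) : ℕ) = 0 := rfl
@[simp] lemma finval1 : ((1 : Fin 4) : ℕ) = 1 := rfl
@[simp] lemma finval2 : ((2 : Fin 4) : ℕ) = 2 := rfl
@[simp] lemma finval3 : ((3 : Fin 4) : ℕ) = 3 := rfl

lemma ncard_le_two {α : Type*} {S : Set α} {x y : α} (h : ∀ w ∈ S, w = x ∨ w = y) :
    S.ncard ≤ 2 := by
  have hsub : S ⊆ {x, y} := fun w hw => by rcases h w hw with h' | h' <;> simp [h']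
  calc S.ncard ≤ ({x, y} : Set α).ncard :=
        Set.ncard_le_ncard hsub ((Set.finite_singleton y).insert x)
    _ ≤ 2 := by
        have := Set.ncard_insert_le x ({y} : Set α)
        simpa [Set.ncard_singleton] using this

lemma isIntervalSet_Icc (lo hi : ℕ) : IsIntervalSet {n | lo ≤ n ∧ n ≤ hi} :=
  fun _ hp _ hq x hpx hxq => ⟨le_trans hp.1 hpx, le_trans hxq hq.2⟩

lemma cond1_x (i : Fin a) (n : ℕ) :
    {w | (Mgraph a b c).Adj (.x i) w ∧ mcol a b c s(.x i, w) = n}.ncard ≤ 2 := by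
  by_cases hn : n = i.val + 2
  · apply ncard_le_two (x := MVert.u 2) (y := MVert.u 2)
    rintro w ⟨hadj, hcol⟩
    rcases w with m | i' | j | k
    · left
      simp [Mgraph, fromRel_adj] at hadj
      simp at hcol
      rcases hadj with h | h | h <;> subst h <;> simp_all <;> omega
    all_goals simp [Mgraph, fromRel_adj] at hadj
  · apply ncard_le_two (x := MVert.u 0) (y := MVert.u 1)
    rintro w ⟨hadj, hcol⟩
    rcases w with m | i' | j | k
    · simp [Mgraph, fromRel_adj] at hadj
      simp at hcol
      rcases hadj with h | h | h <;> subst h <;> simp_all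
    all_goals simp [Mgraph, fromRel_adj] at hadj

lemma cond1_y (j : Fin b) (n : ℕ) :
    {w | (Mgraph a b c).Adj (.y j) w ∧ mcol a b c s(.y j, w) = n}.ncard ≤ 2 := by
  by_cases hn : n = a + j.val + 2
  · apply ncard_le_two (x := MVert.u 3) (y := MVert.u 3)
    rintro w ⟨hadj, hcol⟩
    rcases w with m | i | j' | k
    · left
      simp [Mgraph, fromRel_adj] at hadj
      simp at hcol
      rcases hadj with h | h | h <;> subst h <;> simp_all <;> omega
    all_goals simp [Mgraph, fromRel_adj] at hadj
  · apply ncard_le_two (x := MVert.u 0) (y := MVert.u 2)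
    rintro w ⟨hadj, hcol⟩
    rcases w with m | i | j' | k
    · simp [Mgraph, fromRel_adj] at hadj
      simp at hcol
      rcases hadj with h | h | h <;> subst h <;> simp_all
    all_goals simp [Mgraph, fromRel_adj] at hadj

lemma cond1_z (k : Fin c) (n : ℕ) :
    {w | (Mgraph a b c).Adj (.z k) w ∧ mcol a b c s(.z k, w) = n}.ncard ≤ 2 := by
  by_cases hn : n = a + k.val + 2
  · apply ncard_le_two (x := MVert.u 3) (y := MVert.u 3)
    rintro w ⟨hadj, hcol⟩
    rcases w with m | i | j | k'
    · left
      simp [Mgraph, fromRel_adj] at hadj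
      simp at hcol
      rcases hadj with h | h | h <;> subst h <;> simp_all <;> omega
    all_goals simp [Mgraph, fromRel_adj] at hadj
  · apply ncard_le_two (x := MVert.u 0) (y := MVert.u 1)
    rintro w ⟨hadj, hcol⟩
    rcases w with m | i | j | k'
    · simp [Mgraph, fromRel_adj] at hadj
      simp at hcol
      rcases hadj with h | h | h <;> subst h <;> simp_all
    all_goals simp [Mgraph, fromRel_adj] at hadj

end

section
variable {a b c : ℕ}

lemma cond1_u0 (n : ℕ) :
    {w | (Mgraph a b c).Adj (.u 0) w ∧ mcol a b c s(.u 0, w) = n}.ncard ≤ 2 := by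
  by_cases hn : 1 ≤ n ∧ n ≤ a
  · apply ncard_le_two (x := MVert.x ⟨n - 1, by omega⟩) (y := MVert.x ⟨n - 1, by omega⟩)
    rintro w ⟨hadj, hcol⟩
    rcases w with m | i | j | k
    · simp [Mgraph, fromRel_adj] at hadj
    · left
      simp at hcol
      have := i.isLt
      congr 1
      exact Fin.ext (by simp; omega)
    · simp at hcol; omega
    · simp at hcol; omega
  · apply ncard_le_two
      (x := if h : n - a - 1 < b then MVert.y ⟨n - a - 1, h⟩ else MVert.u 0)
      (y := if h : n - a - 1 < c then MVert.z ⟨n - a - 1, h⟩ else MVert.u 0)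
    rintro w ⟨hadj, hcol⟩
    rcases w with m | i | j | k
    · simp [Mgraph, fromRel_adj] at hadj
    · simp at hcol; have := i.isLt; omega
    · left
      simp at hcol
      have hj := j.isLt
      rw [dif_pos (by omega)]
      congr 1
      exact Fin.ext (by simp; omega)
    · right
      simp at hcol
      have hk := k.isLt
      rw [dif_pos (by omega)]
      congr 1
      exact Fin.ext (by simp; omega)

lemma cond1_u1 (n : ℕ) :
    {w | (Mgraph a b c).Adj (.u 1) w ∧ mcol a b c s(.u 1, w) = n}.ncard ≤ 2 := by
  apply ncard_le_two
    (x := if h : n - 1 < a then MVert.x ⟨n - 1, h⟩ else MVert.u 0)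
    (y := if h : n - a - 1 < c then MVert.z ⟨n - a - 1, h⟩ else MVert.u 0)
  rintro w ⟨hadj, hcol⟩
  rcases w with m | i | j | k
  · simp [Mgraph, fromRel_adj] at hadj
  · left
    simp at hcol
    have := i.isLt
    rw [dif_pos (by omega)]
    congr 1
    exact Fin.ext (by simp; omega)
  · simp [Mgraph, fromRel_adj] at hadj
  · right
    simp at hcol
    have := k.isLt
    rw [dif_pos (by omega)]
    congr 1
    exact Fin.ext (by simp; omega)

lemma cond1_u2 (n : ℕ) :
    {w | (Mgraph a b c).Adj (.u 2) w ∧ mcol a b c s(.u 2, w) = n}.ncard ≤ 2 := by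
  apply ncard_le_two
    (x := if h : n - 2 < a then MVert.x ⟨n - 2, h⟩ else MVert.u 0)
    (y := if h : n - a - 1 < b then MVert.y ⟨n - a - 1, h⟩ else MVert.u 0)
  rintro w ⟨hadj, hcol⟩
  rcases w with m | i | j | k
  · simp [Mgraph, fromRel_adj] at hadj
  · left
    simp at hcol
    have := i.isLt
    rw [dif_pos (by omega)]
    congr 1
    exact Fin.ext (by simp; omega)
  · right
    simp at hcol
    have := j.isLt
    rw [dif_pos (by omega)]
    congr 1
    exact Fin.ext (by simp; omega)
  · simp [Mgraph, fromRel_adj] at hadj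

lemma cond1_u3 (n : ℕ) :
    {w | (Mgraph a b c).Adj (.u 3) w ∧ mcol a b c s(.u 3, w) = n}.ncard ≤ 2 := by
  apply ncard_le_two
    (x := if h : n - a - 2 < b then MVert.y ⟨n - a - 2, h⟩ else MVert.u 0)
    (y := if h : n - a - 2 < c then MVert.z ⟨n - a - 2, h⟩ else MVert.u 0)
  rintro w ⟨hadj, hcol⟩
  rcases w with m | i | j | k
  · simp [Mgraph, fromRel_adj] at hadj
  · simp [Mgraph, fromRel_adj] at hadj
  · left
    simp at hcol
    have := j.isLt
    rw [dif_pos (by omega)]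
    congr 1
    exact Fin.ext (by simp; omega)
  · right
    simp at hcol
    have := k.isLt
    rw [dif_pos (by omega)]
    congr 1
    exact Fin.ext (by simp; omega)

end

section
variable {a b c : ℕ}

lemma spec_x (i : Fin a) :
    (Mgraph a b c).colorSpectrum (mcol a b c) (.x i) =
      {n | i.val + 1 ≤ n ∧ n ≤ i.val + 2} := by
  ext n
  simp only [SimpleGraph.colorSpectrum, Set.mem_setOf_eq]
  constructor
  · rintro ⟨w, hadj, hcol⟩
    rcases w with m | i' | j | k
    · simp [Mgraph, fromRel_adj] at hadj
      simp at hcol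
      rcases hadj with h | h | h <;> subst h <;> simp_all <;> omega
    all_goals simp [Mgraph, fromRel_adj] at hadj
  · rintro ⟨h1, h2⟩
    by_cases h : n = i.val + 1
    · exact ⟨.u 0, by simp [Mgraph, fromRel_adj], by simp; omega⟩
    · exact ⟨.u 2, by simp [Mgraph, fromRel_adj], by simp; omega⟩

lemma spec_y (j : Fin b) :
    (Mgraph a b c).colorSpectrum (mcol a b c) (.y j) =
      {n | a + j.val + 1 ≤ n ∧ n ≤ a + j.val + 2} := by
  ext n
  simp only [SimpleGraph.colorSpectrum, Set.mem_setOf_eq]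
  constructor
  · rintro ⟨w, hadj, hcol⟩
    rcases w with m | i | j' | k
    · simp [Mgraph, fromRel_adj] at hadj
      simp at hcol
      rcases hadj with h | h | h <;> subst h <;> simp_all <;> omega
    all_goals simp [Mgraph, fromRel_adj] at hadj
  · rintro ⟨h1, h2⟩
    by_cases h : n = a + j.val + 1
    · exact ⟨.u 0, by simp [Mgraph, fromRel_adj], by simp; omega⟩
    · exact ⟨.u 3, by simp [Mgraph, fromRel_adj], by simp; omega⟩

lemma spec_z (k : Fin c) :
    (Mgraph a b c).colorSpectrum (mcol a b c) (.z k) =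
      {n | a + k.val + 1 ≤ n ∧ n ≤ a + k.val + 2} := by
  ext n
  simp only [SimpleGraph.colorSpectrum, Set.mem_setOf_eq]
  constructor
  · rintro ⟨w, hadj, hcol⟩
    rcases w with m | i | j | k'
    · simp [Mgraph, fromRel_adj] at hadj
      simp at hcol
      rcases hadj with h | h | h <;> subst h <;> simp_all <;> omega
    all_goals simp [Mgraph, fromRel_adj] at hadj
  · rintro ⟨h1, h2⟩
    by_cases h : n = a + k.val + 1
    · exact ⟨.u 0, by simp [Mgraph, fromRel_adj], by simp; omega⟩
    · exact ⟨.u 3, by simp [Mgraph, fromRel_adj], by simp; omega⟩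

lemma spec_u0 (ha : 0 < a) (hb : 0 < b) (hc : 0 < c) :
    (Mgraph a b c).colorSpectrum (mcol a b c) (.u 0) =
      {n | 1 ≤ n ∧ n ≤ a + max b c} := by
  ext n
  simp only [SimpleGraph.colorSpectrum, Set.mem_setOf_eq]
  constructor
  · rintro ⟨w, hadj, hcol⟩
    rcases w with m | i | j | k
    · simp [Mgraph, fromRel_adj] at hadj
    · simp at hcol; have := i.isLt; omega
    · simp at hcol; have := j.isLt; omega
    · simp at hcol; have := k.isLt; omega
  · rintro ⟨h1, h2⟩
    rcases le_or_gt n a with h | h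
    · exact ⟨.x ⟨n - 1, by omega⟩, by simp [Mgraph, fromRel_adj], by simp; omega⟩
    · rcases le_or_gt n (a + b) with h' | h'
      · exact ⟨.y ⟨n - a - 1, by omega⟩, by simp [Mgraph, fromRel_adj], by simp; omega⟩
      · exact ⟨.z ⟨n - a - 1, by omega⟩, by simp [Mgraph, fromRel_adj], by simp; omega⟩

lemma spec_u1 (ha : 0 < a) (hc : 0 < c) :
    (Mgraph a b c).colorSpectrum (mcol a b c) (.u 1) =
      {n | 1 ≤ n ∧ n ≤ a + c} := by
  ext n
  simp only [SimpleGraph.colorSpectrum, Set.mem_setOf_eq]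
  constructor
  · rintro ⟨w, hadj, hcol⟩
    rcases w with m | i | j | k
    · simp [Mgraph, fromRel_adj] at hadj
    · simp at hcol; have := i.isLt; omega
    · simp [Mgraph, fromRel_adj] at hadj
    · simp at hcol; have := k.isLt; omega
  · rintro ⟨h1, h2⟩
    rcases le_or_gt n a with h | h
    · exact ⟨.x ⟨n - 1, by omega⟩, by simp [Mgraph, fromRel_adj], by simp; omega⟩
    · exact ⟨.z ⟨n - a - 1, by omega⟩, by simp [Mgraph, fromRel_adj], by simp; omega⟩

lemma spec_u2 (ha : 0 < a) (hb : 0 < b) :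
    (Mgraph a b c).colorSpectrum (mcol a b c) (.u 2) =
      {n | 2 ≤ n ∧ n ≤ a + b} := by
  ext n
  simp only [SimpleGraph.colorSpectrum, Set.mem_setOf_eq]
  constructor
  · rintro ⟨w, hadj, hcol⟩
    rcases w with m | i | j | k
    · simp [Mgraph, fromRel_adj] at hadj
    · simp at hcol; have := i.isLt; omega
    · simp at hcol; have := j.isLt; omega
    · simp [Mgraph, fromRel_adj] at hadj
  · rintro ⟨h1, h2⟩
    rcases le_or_gt n (a + 1) with h | h
    · exact ⟨.x ⟨n - 2, by omega⟩, by simp [Mgraph, fromRel_adj], by simp; omega⟩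
    · exact ⟨.y ⟨n - a - 1, by omega⟩, by simp [Mgraph, fromRel_adj], by simp; omega⟩

lemma spec_u3 (hb : 0 < b) (hc : 0 < c) :
    (Mgraph a b c).colorSpectrum (mcol a b c) (.u 3) =
      {n | a + 2 ≤ n ∧ n ≤ a + max b c + 1} := by
  ext n
  simp only [SimpleGraph.colorSpectrum, Set.mem_setOf_eq]
  constructor
  · rintro ⟨w, hadj, hcol⟩
    rcases w with m | i | j | k
    · simp [Mgraph, fromRel_adj] at hadj
    · simp [Mgraph, fromRel_adj] at hadj
    · simp at hcol; have := j.isLt; omega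
    · simp at hcol; have := k.isLt; omega
  · rintro ⟨h1, h2⟩
    rcases le_or_gt n (a + b + 1) with h | h
    · exact ⟨.y ⟨n - a - 2, by omega⟩, by simp [Mgraph, fromRel_adj], by simp; omega⟩
    · exact ⟨.z ⟨n - a - 2, by omega⟩, by simp [Mgraph, fromRel_adj], by simp; omega⟩

end


/-- For all positive `a, b, c`, the impropriety of `M_{a,b,c}` is at most 2. -/
theorem statement2 (a b c : ℕ) (ha : 0 < a) (hb : 0 < b) (hc : 0 < c) :
    (Mgraph a b c).muInt ≤ 2 := by
  apply Nat.sInf_le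
  refine ⟨mcol a b c, ?_, ?_⟩
  · intro v n
    rcases v with m | i | j | k
    · fin_cases m
      · exact cond1_u0 n
      · exact cond1_u1 n
      · exact cond1_u2 n
      · exact cond1_u3 n
    · exact cond1_x i n
    · exact cond1_y j n
    · exact cond1_z k n
  · intro v
    rcases v with m | i | j | k
    · fin_cases m
      · show IsIntervalSet ((Mgraph a b c).colorSpectrum (mcol a b c) (.u 0))
        rw [spec_u0 ha hb hc]; exact isIntervalSet_Icc _ _
      · show IsIntervalSet ((Mgraph a b c).colorSpectrum (mcol a b c) (.u 1))
        rw [spec_u1 ha hc]; exact isIntervalSet_Icc _ _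
      · show IsIntervalSet ((Mgraph a b c).colorSpectrum (mcol a b c) (.u 2))
        rw [spec_u2 ha hb]; exact isIntervalSet_Icc _ _
      · show IsIntervalSet ((Mgraph a b c).colorSpectrum (mcol a b c) (.u 3))
        rw [spec_u3 hb hc]; exact isIntervalSet_Icc _ _
    · rw [spec_x i]; exact isIntervalSet_Icc _ _
    · rw [spec_y j]; exact isIntervalSet_Icc _ _
    · rw [spec_z k]; exact isIntervalSet_Icc _ _
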